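/- Let z : Σ → Σ be a map on a metric space (Σ, d) with d(a, z(a)) ≤ l for all a. Let x, y be strings over Σ and x̃, ỹ their letterwise images under z. Then dtw(x̃, ỹ) ≤ dtw(x, y) + 2l · m, where m is the number of edges in some optimal correspondence for (x, y) whose endpoints are mapped to distinct points by z; in particular dtw(x̃, ỹ) ≤ dtw(x, y) + 2l · dtw_0(x̃', ỹ') where (x̃', ỹ') is the image of that optimal correspondence. -/

import Mathlib

/-! Pushed forward along `z`, an optimal correspondence `(xb, yb)` for `(x, y)` becomes a
correspondence for the snapped strings, so its snapped cost bounds their DTW. An aligned pair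
snapped to the same point now costs `0 ≤ d(a, b)`, and any other pair costs at most
`d(a, b) + 2l` by the triangle inequality through `a` and `b`. -/

/-- `xb` is an expansion of `x`: each letter of `x` is duplicated in place a positive
number of times. -/
def IsExpansion {α : Type*} (x xb : List α) : Prop :=
  ∃ ks : List ℕ, ks.length = x.length ∧ (∀ k ∈ ks, 0 < k) ∧
    xb = (List.zipWith (fun a k => List.replicate k a) x ks).flatten

/-- `(xb, yb)` is a correspondence between `x` and `y`: a pair of equal-length expansions. -/
def IsCorrespondence {α : Type*} (x y xb yb : List α) : Prop :=
  IsExpansion x xb ∧ IsExpansion y yb ∧ xb.length = yb.length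

/-- The cost of a correspondence: summed distances of aligned letters. -/
noncomputable def corrCost {α : Type*} (δ : α → α → ℝ) (xb yb : List α) : ℝ :=
  (List.zipWith δ xb yb).sum

/-- Dynamic time warping distance with respect to a distance function `δ`. -/
noncomputable def dtw {α : Type*} (δ : α → α → ℝ) (x y : List α) : ℝ :=
  sInf {c | ∃ xb yb, IsCorrespondence x y xb yb ∧ c = corrCost δ xb yb}

/-- Generalized Hamming distance on letters. -/
noncomputable def hamDist {α : Type*} [DecidableEq α] (a b : α) : ℝ := if a = b then 0 else 1

/-- DTW over generalized Hamming space. -/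
noncomputable def dtw0 {α : Type*} [DecidableEq α] (x y : List α) : ℝ := dtw hamDist x y

theorem IsExpansion.map {α β : Type*} (f : α → β) {x xb : List α} (h : IsExpansion x xb) :
    IsExpansion (x.map f) (xb.map f) := by
  obtain ⟨ks, hlen, hpos, rfl⟩ := h
  refine ⟨ks, by simpa using hlen, hpos, ?_⟩
  simp [List.map_flatten, List.map_zipWith, List.zipWith_map_left]

theorem IsCorrespondence.map {α β : Type*} (f : α → β) {x y xb yb : List α}
    (h : IsCorrespondence x y xb yb) :
    IsCorrespondence (x.map f) (y.map f) (xb.map f) (yb.map f) :=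
  ⟨h.1.map f, h.2.1.map f, by simpa using h.2.2⟩

section corrCost

variable {α : Type*}

theorem corrCost_nonneg {δ : α → α → ℝ} (hδ : ∀ a b, 0 ≤ δ a b) :
    ∀ xb yb : List α, 0 ≤ corrCost δ xb yb
  | [], _ | _ :: _, [] => by simp [corrCost]
  | a :: xs, b :: ys => by
    simpa [corrCost] using add_nonneg (hδ a b) (corrCost_nonneg hδ xs ys)

theorem corrCost_le_add {δ δ' ε : α → α → ℝ} (h : ∀ a b, δ' a b ≤ δ a b + ε a b) :
    ∀ xb yb : List α, corrCost δ' xb yb ≤ corrCost δ xb yb + corrCost ε xb yb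
  | [], _ | _ :: _, [] => by simp [corrCost]
  | a :: xs, b :: ys => by
    have ih := corrCost_le_add h xs ys
    simp only [corrCost, List.zipWith_cons_cons, List.sum_cons] at ih ⊢
    linarith [h a b]

theorem corrCost_map {β : Type*} (δ : β → β → ℝ) (f : α → β) (xb yb : List α) :
    corrCost δ (xb.map f) (yb.map f) = corrCost (fun a b => δ (f a) (f b)) xb yb := by
  simp [corrCost, List.zipWith_map_left, List.zipWith_map_right]

theorem dtw_le_corrCost {δ : α → α → ℝ} (hδ : ∀ a b, 0 ≤ δ a b) {x y xb yb : List α}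
    (hc : IsCorrespondence x y xb yb) : dtw δ x y ≤ corrCost δ xb yb :=
  csInf_le ⟨0, by rintro _ ⟨_, _, -, rfl⟩; exact corrCost_nonneg hδ _ _⟩ ⟨xb, yb, hc, rfl⟩

end corrCost

theorem dist_snap_le {σ : Type*} [PseudoMetricSpace σ] [DecidableEq σ] {z : σ → σ} {l : ℝ}
    (hz : ∀ a, dist a (z a) ≤ l) (a b : σ) :
    dist (z a) (z b) ≤ dist a b + 2 * l * (if z a = z b then 0 else 1) := by
  split_ifs with h
  · simp [h, dist_nonneg]
  · linarith [dist_triangle4 (z a) a b (z b), dist_comm (z a) a, hz a, hz b]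

/-- Snapping each point to a representative at distance at most l increases DTW by at
most 2l·m, where m is the number of edges of an optimal correspondence for (x, y)
whose endpoints are mapped to distinct points by z. -/
theorem dtw_snap_upper {σ : Type*} [MetricSpace σ] [DecidableEq σ] (z : σ → σ) (l : ℝ)
    (hz : ∀ a, dist a (z a) ≤ l) (x y xb yb : List σ)
    (hc : IsCorrespondence x y xb yb)
    (hopt : corrCost dist xb yb = dtw dist x y) :
    dtw dist (x.map z) (y.map z) ≤
      dtw dist x y +
        2 * l * ((List.zipWith (fun a b => if z a = z b then (0 : ℝ) else 1) xb yb).sum) := by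
  have hsnap : corrCost dist (xb.map z) (yb.map z) ≤ corrCost dist xb yb +
      corrCost (fun a b => 2 * l * if z a = z b then (0 : ℝ) else 1) xb yb := by
    rw [corrCost_map]
    exact corrCost_le_add (dist_snap_le hz) xb yb
  calc dtw dist (x.map z) (y.map z) ≤ corrCost dist (xb.map z) (yb.map z) :=
        dtw_le_corrCost (fun _ _ => dist_nonneg) (hc.map z)
    _ ≤ _ := hsnap
    _ = _ := by rw [hopt, corrCost, List.sum_zipWith_distrib_left]
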